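/- Let L be a c-lattice, S a multiplicatively closed subset, q an S-p-primary element (p = √q S-prime), and x ∈ L with s·x ≰ q for all s ∈ S. Then (q : x) is an S-primary element of L and (√(q : x))_S = p_S, where a_S = ⋁{y | s·y ≤ a for some s ∈ S} denotes S-saturation. -/
import Mathlib

open CompleteLattice

class MulLattice (L : Type*) extends CompleteLattice L, CommMonoid L where
  mul_sSup : ∀ (a : L) (s : Set L), a * sSup s = ⨆ b ∈ s, a * b
  one_eq_top : (1 : L) = ⊤

variable {L : Type*} [MulLattice L]

/-- Residual `(a : b)`. -/
def mres (a b : L) : L := sSup {x : L | x * b ≤ a}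

/-- Lattice-theoretic radical. -/
def rad (a : L) : L :=
  sSup {x : L | IsCompactElement x ∧ ∃ n : ℕ, 0 < n ∧ x ^ n ≤ a}

def IsMeetPrincipal (m : L) : Prop :=
  ∀ a b : L, a ⊓ m * b = m * (mres a m ⊓ b)

def IsJoinPrincipal (m : L) : Prop :=
  ∀ a b : L, a ⊔ mres b m = mres (a * m ⊔ b) m

def IsPrincipal (m : L) : Prop := IsMeetPrincipal m ∧ IsJoinPrincipal m

/-- A multiplicatively closed subset of compact elements with `1 ∈ S`, `0 ∉ S`. -/
def MultClosed (S : Set L) : Prop :=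
  (∀ s ∈ S, IsCompactElement s) ∧ (1 : L) ∈ S ∧ (⊥ : L) ∉ S ∧
    ∀ s ∈ S, ∀ t ∈ S, s * t ∈ S

def SCompact (S : Set L) (a : L) : Prop :=
  ∃ s ∈ S, ∃ b : L, IsCompactElement b ∧ s * a ≤ b ∧ b ≤ a

def SPrime (S : Set L) (p : L) : Prop :=
  p ≠ ⊤ ∧ (∀ t ∈ S, ¬ t ≤ p) ∧
    ∃ s ∈ S, ∀ a b : L, a * b ≤ p → s * a ≤ p ∨ s * b ≤ p

def SPrimary (S : Set L) (q : L) : Prop :=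
  q ≠ ⊤ ∧ (∀ t ∈ S, ¬ t ≤ q) ∧
    ∃ s ∈ S, ∀ c d : L, c * d ≤ q → s * c ≤ q ∨ s * d ≤ rad q

def Ssat (S : Set L) (a : L) : L := sSup {x : L | ∃ s ∈ S, s * x ≤ a}

class RLattice (L : Type*) extends MulLattice L where
  modular : ∀ a b c : L, a ≤ c → a ⊔ (b ⊓ c) = (a ⊔ b) ⊓ c
  principally_generated : ∀ a : L, a = sSup {m : L | IsPrincipal m ∧ m ≤ a}
  compactly_generated : ∀ a : L, a = sSup {c : L | IsCompactElement c ∧ c ≤ a}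
  top_compact : IsCompactElement (⊤ : L)

class CLattice (L : Type*) extends MulLattice L where
  compactly_generated : ∀ a : L, a = sSup {c : L | IsCompactElement c ∧ c ≤ a}
  top_compact : IsCompactElement (⊤ : L)
  compact_mul : ∀ a b : L, IsCompactElement a → IsCompactElement b →
    IsCompactElement (a * b)

-- auxiliary lemmas

lemma myMul_mono_right (a : L) {b c : L} (h : b ≤ c) : a * b ≤ a * c := by
  have : a * sSup {b, c} = ⨆ x ∈ ({b, c} : Set L), a * x := MulLattice.mul_sSup a _
  have h2 : sSup ({b, c} : Set L) = c := by
    rw [sSup_pair, sup_eq_right.mpr h]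
  rw [h2] at this
  rw [this]
  exact le_trans (le_refl _) (le_iSup₂_of_le b (by simp) le_rfl)

lemma myMul_mono_left {a b : L} (c : L) (h : a ≤ b) : a * c ≤ b * c := by
  rw [mul_comm a c, mul_comm b c]; exact myMul_mono_right c h

lemma myMul_le_left (a b : L) : a * b ≤ a := by
  have : a * b ≤ a * 1 := by
    rw [MulLattice.one_eq_top]; exact myMul_mono_right a le_top
  simpa using this

lemma myMul_le_right (a b : L) : a * b ≤ b := by
  rw [mul_comm]; exact myMul_le_left b a

lemma mres_mul_le (a b : L) : mres a b * b ≤ a := by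
  rw [mul_comm, mres, MulLattice.mul_sSup]
  exact iSup₂_le fun y hy => by rw [mul_comm]; exact hy

lemma le_mres_of (a b y : L) (h : y * b ≤ a) : y ≤ mres a b := le_sSup h

lemma rad_mono {a b : L} (h : a ≤ b) : rad a ≤ rad b :=
  sSup_le_sSup fun x ⟨hc, n, hn, hle⟩ => ⟨hc, n, hn, hle.trans h⟩

lemma Ssat_mono (S : Set L) {a b : L} (h : a ≤ b) : Ssat S a ≤ Ssat S b :=
  sSup_le_sSup fun _ ⟨s, hs, hle⟩ => ⟨s, hs, hle.trans h⟩

lemma myMul_sup (a b c : L) : a * (b ⊔ c) = a * b ⊔ a * c := by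
  have : a * sSup {b, c} = ⨆ x ∈ ({b, c} : Set L), a * x := MulLattice.mul_sSup a _
  rw [sSup_pair] at this
  rw [this, iSup_pair]

/-- directedness of the saturation set -/
lemma ssat_set_directed (S : Set L) (hS : MultClosed S) (b : L) :
    DirectedOn (· ≤ ·) {x : L | ∃ s ∈ S, s * x ≤ b} := by
  rintro z₁ ⟨t₁, ht₁, h₁⟩ z₂ ⟨t₂, ht₂, h₂⟩
  refine ⟨z₁ ⊔ z₂, ⟨t₁ * t₂, hS.2.2.2 t₁ ht₁ t₂ ht₂, ?_⟩, le_sup_left, le_sup_right⟩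
  rw [myMul_sup]
  apply sup_le
  · calc t₁ * t₂ * z₁ = t₂ * (t₁ * z₁) := by rw [mul_comm t₁ t₂, mul_assoc]
    _ ≤ t₁ * z₁ := myMul_le_right _ _
    _ ≤ b := h₁
  · calc t₁ * t₂ * z₂ = t₁ * (t₂ * z₂) := by rw [mul_assoc]
    _ ≤ t₂ * z₂ := myMul_le_right _ _
    _ ≤ b := h₂

lemma compact_le_Ssat {L : Type*} [CLattice L] (S : Set L) (hS : MultClosed S)
    {c b : L} (hc : IsCompactElement c) (h : c ≤ Ssat S b) : ∃ t ∈ S, t * c ≤ b := by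
  obtain ⟨z, ⟨t, htS, htz⟩, hcz⟩ :=
    (CompleteLattice.isCompactElement_iff_le_of_directed_sSup_le L c).mp hc _
      (⟨⊥, 1, hS.2.1, by simp⟩ : Set.Nonempty {x : L | ∃ s ∈ S, s * x ≤ b}) (ssat_set_directed S hS b) h
  exact ⟨t, htS, le_trans (myMul_mono_right t hcz) htz⟩

lemma Ssat_le_of_le_Ssat {L : Type*} [CLattice L] (S : Set L) (hS : MultClosed S)
    {a b : L} (h : a ≤ Ssat S b) : Ssat S a ≤ Ssat S b := by
  apply _root_.sSup_le
  rintro y ⟨s, hsS, hsy⟩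
  have hy : y = sSup {c : L | IsCompactElement c ∧ c ≤ y} := CLattice.compactly_generated y
  rw [hy]
  apply _root_.sSup_le
  rintro c ⟨hc, hcy⟩
  have hsc : IsCompactElement (s * c) := CLattice.compact_mul s c (hS.1 s hsS) hc
  have : s * c ≤ Ssat S b := le_trans (le_trans (myMul_mono_right s hcy) hsy) h
  obtain ⟨t, htS, ht⟩ := compact_le_Ssat S hS hsc this
  refine le_sSup ⟨t * s, hS.2.2.2 t htS s hsS, ?_⟩
  calc t * s * c = t * (s * c) := by rw [mul_assoc]
  _ ≤ b := ht

/-- prime descent on powers -/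
lemma prime_pow_descend (S : Set L) (hS : MultClosed S) (p w : L)
    (s₁ : L) (hs₁S : s₁ ∈ S) (hs₁ : ∀ a b : L, a * b ≤ p → s₁ * a ≤ p ∨ s₁ * b ≤ p) :
    ∀ n : ℕ, 0 < n → ∀ s ∈ S, s * w ^ n ≤ p → ∃ t ∈ S, t * w ≤ p := by
  intro n
  induction n with
  | zero => intro h; exact absurd h (by norm_num)
  | succ m ih =>
    intro _ s hsS hpow
    rcases Nat.eq_zero_or_pos m with hm | hm
    · subst hm; exact ⟨s, hsS, by simpa using hpow⟩
    · have : (s * w) * w ^ m ≤ p := by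
        rw [mul_assoc, mul_comm w (w ^ m), ← pow_succ]; exact hpow
      rcases hs₁ (s * w) (w ^ m) this with h | h
      · exact ⟨s₁ * s, hS.2.2.2 s₁ hs₁S s hsS, by rwa [mul_assoc]⟩
      · exact ih hm s₁ hs₁S h

theorem stmt19 {L : Type*} [CLattice L] (S : Set L) (hS : MultClosed S)
    (q p x : L) (hq : SPrimary S q) (hrad : rad q = p) (hp : SPrime S p)
    (hx : ∀ s ∈ S, ¬ s * x ≤ q) :
    SPrimary S (mres q x) ∧ Ssat S (rad (mres q x)) = Ssat S p := by
  obtain ⟨hqne, hqS, s₀, hs₀S, hs₀⟩ := hq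
  obtain ⟨hpne, hpS, s₁, hs₁S, hs₁⟩ := hp
  have hmq : mres q x * x ≤ q := mres_mul_le q x
  have hqle : q ≤ mres q x := le_mres_of _ _ _ (myMul_le_left q x)
  have hradle : p ≤ rad (mres q x) := hrad ▸ rad_mono hqle
  have hne : mres q x ≠ ⊤ := by
    intro h
    apply hx 1 hS.2.1
    rw [one_mul]
    calc x = ⊤ * x := by rw [← MulLattice.one_eq_top, one_mul]
    _ = mres q x * x := by rw [h]
    _ ≤ q := hmq
  have hnle : ∀ t ∈ S, ¬ t ≤ mres q x := by
    intro t htS hle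
    exact hx t htS (le_trans (myMul_mono_left x hle) hmq)
  have hradSsat : rad (mres q x) ≤ Ssat S p := by
    apply _root_.sSup_le
    rintro w ⟨hwc, n, hn, hwn⟩
    have hwx : x * w ^ n ≤ q := by
      rw [mul_comm]
      exact le_trans (myMul_mono_left x hwn) hmq
    rcases hs₀ x (w ^ n) hwx with h | h
    · exact absurd h (hx s₀ hs₀S)
    · rw [hrad] at h
      obtain ⟨t, htS, htw⟩ := prime_pow_descend S hS p w s₁ hs₁S hs₁ n hn s₀ hs₀S h
      exact le_sSup ⟨t, htS, htw⟩
  refine ⟨⟨hne, hnle, s₀, hs₀S, ?_⟩, le_antisymm (Ssat_le_of_le_Ssat S hS hradSsat)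
    (Ssat_mono S hradle)⟩
  intro c d hcd
  have : (c * x) * d ≤ q := by
    calc (c * x) * d = (c * d) * x := by rw [mul_assoc, mul_comm x d, ← mul_assoc]
    _ ≤ mres q x * x := myMul_mono_left x hcd
    _ ≤ q := hmq
  rcases hs₀ (c * x) d this with h | h
  · left
    exact le_mres_of _ _ _ (by rw [mul_assoc]; exact h)
  · right
    rw [hrad] at h
    exact le_trans h hradle
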